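/- arXiv:2401.08372 — 3 statements merged into one kernel-verified Lean document; each statement's English description precedes it below -/
import Mathlib

section
/- Let S be a subgroup of ℝ^p and Γ a full lattice of ℝ^p acting freely and properly on the homogeneous space ℝ^p/S (via translations). Then S is discrete, the subgroup generated by S and Γ is a full lattice of ℝ^p, and S is trivial. -/
/-!
Since `ℝ^p ⧸ Γ` is compact, every point of `ℝ^p` lies within a fixed distance `d` of `Γ`.
If `x ∈ S` and `γ ∈ Γ` are `d`-close, then `γ` moves the compact image of the closed
`d`-ball in `ℝ^p ⧸ S` onto a set meeting it, so properness leaves only finitely many such `γ`.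
Hence `S` is bounded, and a bounded subgroup of a real vector space is trivial; the remaining
claims are then those about `Γ` itself.
-/

theorem AddSubgroup.exists_norm_sub_lt_of_compactSpace_quotient {E : Type*}
    [SeminormedAddCommGroup E] (Γ : AddSubgroup E) [CompactSpace (E ⧸ Γ)] :
    ∃ d, ∀ x : E, ∃ γ ∈ Γ, ‖x - γ‖ < d := by
  obtain ⟨C, hC⟩ := isCompact_univ.isBounded.exists_norm_le (E := E ⧸ Γ)
  refine ⟨C + 1, fun x => ?_⟩
  obtain ⟨y, hyx, hy⟩ := QuotientAddGroup.norm_lt_iff.1 ((hC x trivial).trans_lt (lt_add_one C))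
  refine ⟨x - y, ?_, by simpa using hy⟩
  rw [sub_eq_neg_add]
  exact QuotientAddGroup.eq.1 hyx

theorem AddSubgroup.eq_bot_of_forall_norm_le {E : Type*} [NormedAddCommGroup E]
    [NormedSpace ℝ E] (S : AddSubgroup E) (C : ℝ) (hC : ∀ x ∈ S, ‖x‖ ≤ C) : S = ⊥ := by
  refine (AddSubgroup.eq_bot_iff_forall S).2 fun s hs => ?_
  by_contra hs0
  obtain ⟨n, hn⟩ := exists_nat_gt (C / ‖s‖)
  have hns := hC (n • s) (S.nsmul_mem hs n)
  rw [RCLike.norm_nsmul ℝ, nsmul_eq_mul, ← le_div_iff₀ (norm_pos_iff.2 hs0)] at hns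
  linarith

theorem AddSubgroup.eq_bot_of_cocompact_acts_properly {E : Type*} [NormedAddCommGroup E]
    [NormedSpace ℝ E] [ProperSpace E] (S Γ : AddSubgroup E) [CompactSpace (E ⧸ Γ)]
    (hproper : ∀ K : Set (E ⧸ S), IsCompact K →
      {γ : Γ | ((fun x => ((γ : E) : E ⧸ S) + x) '' K ∩ K).Nonempty}.Finite) :
    S = ⊥ := by
  obtain ⟨d, hd⟩ := Γ.exists_norm_sub_lt_of_compactSpace_quotient
  set K : Set (E ⧸ S) := QuotientAddGroup.mk '' Metric.closedBall 0 d
  set F := {γ : Γ | ((fun x => ((γ : E) : E ⧸ S) + x) '' K ∩ K).Nonempty}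
  have hF : F.Finite := hproper K ((isCompact_closedBall 0 d).image continuous_quotient_mk')
  -- `γ` carries the class of `x - γ ∈ closedBall 0 d` to that of `x ∈ S`, which is `0 ∈ K`.
  have near_mem_F : ∀ x ∈ S, ∀ γ : Γ, ‖x - γ‖ < d → γ ∈ F := by
    intro x hx γ hγ
    refine ⟨0, ⟨x - γ, ⟨x - γ, by simpa using hγ.le, rfl⟩, ?_⟩,
      ⟨0, by simpa using (norm_nonneg _).trans hγ.le, rfl⟩⟩
    change ((γ : E) : E ⧸ S) + ((x - γ : E) : E ⧸ S) = 0
    rw [← QuotientAddGroup.mk_add, add_sub_cancel]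
    exact (QuotientAddGroup.eq_zero_iff x).2 hx
  obtain ⟨R, hR⟩ := (hF.image fun γ : Γ => ‖(γ : E)‖).bddAbove
  refine S.eq_bot_of_forall_norm_le (R + d) fun x hx => ?_
  obtain ⟨γ, hγΓ, hγ⟩ := hd x
  have hγR := hR ⟨⟨γ, hγΓ⟩, near_mem_F x hx ⟨γ, hγΓ⟩ hγ, rfl⟩
  calc ‖x‖ ≤ ‖x - γ‖ + ‖γ‖ := norm_le_norm_sub_add x γ
    _ ≤ R + d := by linarith

theorem stmt_3_general (p : ℕ) (S Γ : AddSubgroup (Fin p → ℝ))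
    (hΓdisc : DiscreteTopology Γ) (hΓcocpt : CompactSpace ((Fin p → ℝ) ⧸ Γ))
    (hproper : ∀ K : Set ((Fin p → ℝ) ⧸ S), IsCompact K →
      {γ : Γ | ((fun x => ((γ : Fin p → ℝ) : (Fin p → ℝ) ⧸ S) + x) '' K ∩ K).Nonempty}.Finite) :
    DiscreteTopology S ∧
      (DiscreteTopology (S ⊔ Γ : AddSubgroup (Fin p → ℝ)) ∧
        CompactSpace ((Fin p → ℝ) ⧸ (S ⊔ Γ : AddSubgroup (Fin p → ℝ)))) ∧
      S = ⊥ := by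
  obtain rfl : S = ⊥ := S.eq_bot_of_cocompact_acts_properly Γ hproper
  rw [bot_sup_eq]
  exact ⟨Subsingleton.discreteTopology, ⟨hΓdisc, hΓcocpt⟩, rfl⟩

/-- If S is a subgroup of ℝ^p and Γ a full lattice acting freely and
properly by translations on ℝ^p/S, then S is discrete, ⟨S, Γ⟩ is a full lattice
of ℝ^p, and S is trivial. -/
theorem stmt_3 (p : ℕ) (S Γ : AddSubgroup (Fin p → ℝ))
    (hΓdisc : DiscreteTopology Γ) (hΓcocpt : CompactSpace ((Fin p → ℝ) ⧸ Γ))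
    (hfree : ∀ γ ∈ Γ, ∀ x : (Fin p → ℝ) ⧸ S,
      (γ : (Fin p → ℝ) ⧸ S) + x = x → γ = 0)
    (hproper : ∀ K : Set ((Fin p → ℝ) ⧸ S), IsCompact K →
      {γ : Γ | ((fun x => ((γ : Fin p → ℝ) : (Fin p → ℝ) ⧸ S) + x) '' K ∩ K).Nonempty}.Finite) :
    DiscreteTopology S ∧
      (DiscreteTopology (S ⊔ Γ : AddSubgroup (Fin p → ℝ)) ∧
        CompactSpace ((Fin p → ℝ) ⧸ (S ⊔ Γ : AddSubgroup (Fin p → ℝ)))) ∧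
      S = ⊥ :=
  stmt_3_general p S Γ hΓdisc hΓcocpt hproper
end

section
/- Let γ: ℝ^q → ℝ^q, γ(a) = A a + b be an affine map with A^m = I for some m ≥ 1, such that γ^m is a translation. If γ has no fixed point, then γ^m is a nontrivial translation; more precisely, writing b = b₁ + b₂ along ℝ^q = ker(A−I) ⊕ ker R(A) (with X^m−1 = (X−1)R(X)), one has b₁ ≠ 0 and there exists v with γ^m(v) = v + m·b₁. -/
/-!
Iterating `γ = A · + b` gives `γ^[n] a = A^n a + R_n(A) b` with `R_n(X) = 1 + X + ⋯ + X^{n-1}`.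
Since `A^m = 1`, `A b₁ = b₁` and `R(A) b₂ = 0`, this makes `γ^[m]` the translation by `m • b₁`.
If `b₁ = 0`, the orbit of `0` is periodic, and its centroid is a fixed point of `γ`: an affine map
preserves centroids and permutes a periodic orbit cyclically.
-/

open Matrix Finset

theorem Finset.sum_range_succ_eq_of_apply_eq {M : Type*} [AddCommMonoid M] (g : ℕ → M) {m : ℕ}
    (h : g m = g 0) : ∑ i ∈ range m, g (i + 1) = ∑ i ∈ range m, g i := by
  cases m with
  | zero => simp
  | succ n => rw [sum_range_succ, sum_range_succ', h]

section AffineSpace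

variable {k V P : Type*} [DivisionRing k] [AddCommGroup V] [Module k V] [AddTorsor V P]

theorem Finset.centroid_range_succ_eq_of_apply_eq (p : ℕ → P) {m : ℕ} (h : p m = p 0) :
    (range m).centroid k (fun i => p (i + 1)) = (range m).centroid k p := by
  simp only [centroid_def, affineCombination_apply, weightedVSubOfPoint_apply,
    centroidWeights_apply]
  rw [sum_range_succ_eq_of_apply_eq (fun i => _ • (p i -ᵥ _)) (by rw [h])]

theorem AffineMap.exists_isFixedPt_of_isPeriodicPt [CharZero k] (f : P →ᵃ[k] P) {m : ℕ}
    (hm : m ≠ 0) {x : P} (hx : Function.IsPeriodicPt f m x) : ∃ y, Function.IsFixedPt f y := by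
  refine ⟨(range m).centroid k (fun i => f^[i] x), ?_⟩
  have hweights := sum_centroidWeights_eq_one_of_card_ne_zero k (range m) (by simpa using hm)
  have hshift := centroid_range_succ_eq_of_apply_eq (k := k) (fun i => f^[i] x) hx
  simp only [Function.iterate_succ_apply', centroid_def] at hshift
  rw [Function.IsFixedPt, centroid_def, map_affineCombination _ _ _ hweights]
  exact hshift

end AffineSpace

theorem AffineMap.iterate_apply_eq_pow_add_sum {k V : Type*} [Ring k] [AddCommGroup V]
    [Module k V] (f : V →ᵃ[k] V) (n : ℕ) (x : V) :
    f^[n] x = (f.linear ^ n) x + (∑ i ∈ range n, f.linear ^ i) (f 0) := by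
  induction n with
  | zero => simp
  | succ n ih =>
    rw [Function.iterate_succ_apply', ih, geom_sum_succ, f.decomp]
    simp [pow_succ', add_assoc]

theorem Module.End.sum_pow_apply_add_eq_nsmul {R M : Type*} [Semiring R] [AddCommMonoid M]
    [Module R M] (L : Module.End R M) (m : ℕ) {x₁ x₂ : M} (h₁ : L x₁ = x₁)
    (h₂ : (∑ i ∈ range m, L ^ i) x₂ = 0) : (∑ i ∈ range m, L ^ i) (x₁ + x₂) = m • x₁ := by
  have hpow : ∀ i, (L ^ i) x₁ = x₁ := fun i => by
    rw [Module.End.pow_apply, Function.iterate_fixed h₁]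
  rw [map_add, h₂, add_zero, LinearMap.sum_apply]
  simp [hpow]

theorem stmt_6_general (q : ℕ) (A : Matrix (Fin q) (Fin q) ℝ) (b b₁ b₂ : Fin q → ℝ)
    (γ : (Fin q → ℝ) → (Fin q → ℝ)) (hγ : ∀ a, γ a = A *ᵥ a + b)
    (m : ℕ) (hm : 1 ≤ m) (hAm : A ^ m = 1)
    (hb : b = b₁ + b₂)
    (hb₁ : b₁ ∈ LinearMap.ker (Matrix.toLin' (A - 1)))
    (hb₂ : b₂ ∈ LinearMap.ker (Matrix.toLin' (∑ i ∈ Finset.range m, A ^ i)))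
    (hnofix : ∀ a, γ a ≠ a) :
    b₁ ≠ 0 ∧ ∃ v : Fin q → ℝ, γ^[m] v = v + m • b₁ := by
  let f : (Fin q → ℝ) →ᵃ[ℝ] (Fin q → ℝ) :=
    ⟨γ, toLin' A, fun p v => by simp [hγ, mulVec_add, add_assoc]⟩
  have hfγ : ⇑f = γ := rfl
  have hf₀ : f 0 = b₁ + b₂ := by simp [hfγ, hγ, hb]
  have hLb₁ : f.linear b₁ = b₁ := by simpa [f, sub_mulVec, sub_eq_zero] using hb₁
  have hRb₂ : (∑ i ∈ range m, f.linear ^ i) b₂ = 0 := by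
    simpa [f, ← toLin'_pow, map_sum] using hb₂
  have hLm : f.linear ^ m = 1 := by simp [f, ← toLin'_pow, hAm, Module.End.one_eq_id]
  have hγm : ∀ v, γ^[m] v = v + m • b₁ := fun v => by
    simpa [hfγ, hLm, hf₀, Module.End.sum_pow_apply_add_eq_nsmul _ m hLb₁ hRb₂] using
      f.iterate_apply_eq_pow_add_sum m v
  refine ⟨fun h₁ => ?_, 0, hγm 0⟩
  have hperiodic : Function.IsPeriodicPt f m 0 := by
    simpa [Function.IsPeriodicPt, Function.IsFixedPt, hfγ, h₁] using hγm 0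
  obtain ⟨v, hv⟩ := f.exists_isFixedPt_of_isPeriodicPt (by omega) hperiodic
  exact hnofix v hv

/-- Let γ(a) = A a + b be an affine map of ℝ^q with A^m = I (m ≥ 1)
and γ^m a translation. Writing b = b₁ + b₂ along ℝ^q = ker(A−I) ⊕ ker R(A),
if γ has no fixed point then b₁ ≠ 0 and there exists v with γ^m(v) = v + m·b₁. -/
theorem stmt_6 (q : ℕ) (A : Matrix (Fin q) (Fin q) ℝ) (b b₁ b₂ : Fin q → ℝ)
    (γ : (Fin q → ℝ) → (Fin q → ℝ)) (hγ : ∀ a, γ a = A *ᵥ a + b)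
    (m : ℕ) (hm : 1 ≤ m) (hAm : A ^ m = 1)
    (htrans : ∃ c : Fin q → ℝ, ∀ a, γ^[m] a = a + c)
    (hb : b = b₁ + b₂)
    (hb₁ : b₁ ∈ LinearMap.ker (Matrix.toLin' (A - 1)))
    (hb₂ : b₂ ∈ LinearMap.ker (Matrix.toLin' (∑ i ∈ Finset.range m, A ^ i)))
    (hnofix : ∀ a, γ a ≠ a) :
    b₁ ≠ 0 ∧ ∃ v : Fin q → ℝ, γ^[m] v = v + m • b₁ :=
  stmt_6_general q A b b₁ b₂ γ hγ m hm hAm hb hb₁ hb₂ hnofix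
end

section
/- Let A ∈ GL_p(ℤ) and suppose A restricted to an A-invariant subspace E ⊆ ℝ^p is a similarity (i.e., A|_E = λ P^{-1} O P with λ > 0, O orthogonal, P invertible), and suppose the image of E in the torus ℝ^p/ℤ^p is dense. Then A is semisimple. -/
open Matrix Polynomial Pointwise

/-- The standard integer lattice ℤ^p inside ℝ^p. -/
def intLattice (p : ℕ) : AddSubgroup (Fin p → ℝ) :=
  (AddMonoidHom.mk' (fun v : Fin p → ℤ => fun i => (v i : ℝ))
    (by intro a b; funext i; simp)).range


lemma aux_commute_aeval {R A : Type*} [CommSemiring R] [Semiring A] [Algebra R A]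
    {a b : A} (h : Commute a b) (P Q : R[X]) :
    Commute (aeval a P) (aeval b Q) := by
  have key : ∀ (c : A) (S : R[X]) (x : A), Commute x c → Commute (aeval x S) c := by
    intro c S x hc
    induction S using Polynomial.induction_on' with
    | add f g hf hg => rw [map_add]; exact hf.add_left hg
    | monomial n r =>
        rw [Polynomial.aeval_monomial]
        exact ((Algebra.commute_algebraMap_left r c)).mul_left (hc.pow_left n) |>.symm.symm
  have h1 : Commute a (aeval b Q) := ((key a Q b h.symm).symm : _)
  exact key _ P a h1

variable {p : ℕ}

lemma aux_aeval_mem (E : Submodule ℝ (Fin p → ℝ)) (M : Matrix (Fin p) (Fin p) ℝ)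
    (hM : ∀ v ∈ E, M *ᵥ v ∈ E) (q : ℝ[X]) : ∀ v ∈ E, (aeval M q) *ᵥ v ∈ E := by
  have hpow : ∀ (n : ℕ), ∀ v ∈ E, (M ^ n) *ᵥ v ∈ E := by
    intro n
    induction n with
    | zero => intro v hv; simpa using hv
    | succ n ih =>
        intro v hv
        rw [pow_succ', ← Matrix.mulVec_mulVec]
        exact hM _ (ih v hv)
  intro v hv
  induction q using Polynomial.induction_on' with
  | add f g hf hg => rw [map_add, Matrix.add_mulVec]; exact E.add_mem hf hg
  | monomial n r =>
      have : (aeval M (monomial n r)) *ᵥ v = r • ((M ^ n) *ᵥ v) := by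
        rw [Polynomial.aeval_monomial, ← Matrix.mulVec_mulVec]
        rw [show (algebraMap ℝ (Matrix (Fin p) (Fin p) ℝ)) r = r • 1 from Algebra.algebraMap_eq_smul_one r]
        rw [Matrix.smul_mulVec, Matrix.one_mulVec]
      rw [this]
      exact E.smul_mem r (hpow n v hv)


lemma aux_pow_mem (E : Submodule ℝ (Fin p → ℝ)) (M : Matrix (Fin p) (Fin p) ℝ)
    (hM : ∀ v ∈ E, M *ᵥ v ∈ E) (n : ℕ) : ∀ v ∈ E, (M ^ n) *ᵥ v ∈ E := by
  induction n with
  | zero => intro v hv; simpa using hv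
  | succ n ih =>
      intro v hv
      rw [pow_succ', ← Matrix.mulVec_mulVec]
      exact hM _ (ih v hv)

lemma aux_aeval_adjoint (E : Submodule ℝ (Fin p → ℝ)) (M Mi : Matrix (Fin p) (Fin p) ℝ)
    (hME : ∀ v ∈ E, M *ᵥ v ∈ E) (hMiE : ∀ v ∈ E, Mi *ᵥ v ∈ E)
    (hadj : ∀ v ∈ E, ∀ w ∈ E, (M *ᵥ v) ⬝ᵥ w = v ⬝ᵥ (Mi *ᵥ w)) (q : ℝ[X]) :
    ∀ v ∈ E, ∀ w ∈ E, ((aeval M q) *ᵥ v) ⬝ᵥ w = v ⬝ᵥ ((aeval Mi q) *ᵥ w) := by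
  have hpow : ∀ (n : ℕ), ∀ v ∈ E, ∀ w ∈ E,
      ((M ^ n) *ᵥ v) ⬝ᵥ w = v ⬝ᵥ ((Mi ^ n) *ᵥ w) := by
    intro n
    induction n with
    | zero => intro v hv w hw; simp
    | succ n ih =>
        intro v hv w hw
        have h1 : (M ^ (n+1)) *ᵥ v = (M ^ n) *ᵥ (M *ᵥ v) := by
          rw [Matrix.mulVec_mulVec, ← pow_succ]
        have h2 : (Mi ^ (n+1)) *ᵥ w = Mi *ᵥ ((Mi ^ n) *ᵥ w) := by
          rw [Matrix.mulVec_mulVec, ← pow_succ']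
        rw [h1, h2, ih (M *ᵥ v) (hME v hv) w hw,
          hadj v hv _ (aux_pow_mem E Mi hMiE n w hw)]
  intro v hv w hw
  induction q using Polynomial.induction_on' with
  | add f g hf hg => simp only [map_add, Matrix.add_mulVec, add_dotProduct,
      dotProduct_add, hf, hg]
  | monomial n r =>
      have key : ∀ (X : Matrix (Fin p) (Fin p) ℝ) (u : Fin p → ℝ),
          (aeval X (monomial n r)) *ᵥ u = r • ((X ^ n) *ᵥ u) := by
        intro X u
        rw [Polynomial.aeval_monomial, ← Matrix.mulVec_mulVec,
          show (algebraMap ℝ (Matrix (Fin p) (Fin p) ℝ)) r = r • 1 from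
            Algebra.algebraMap_eq_smul_one r,
          Matrix.smul_mulVec, Matrix.one_mulVec]
      rw [key, key, smul_dotProduct, dotProduct_smul,
        hpow n v hv w hw]

lemma aux_nilpotent_vanish (E : Submodule ℝ (Fin p → ℝ)) (N Nt : Matrix (Fin p) (Fin p) ℝ)
    (hc : Commute Nt N) (hNE : ∀ v ∈ E, N *ᵥ v ∈ E) (hNtE : ∀ v ∈ E, Nt *ᵥ v ∈ E)
    (hadjNt : ∀ v ∈ E, ∀ w ∈ E, (Nt *ᵥ v) ⬝ᵥ w = v ⬝ᵥ (N *ᵥ w))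
    (k : ℕ) (hnil : N ^ k = 0) : ∀ v ∈ E, N *ᵥ v = 0 := by
  set S := Nt * N with hS
  have hSE : ∀ v ∈ E, S *ᵥ v ∈ E := by
    intro v hv
    rw [hS, ← Matrix.mulVec_mulVec]
    exact hNtE _ (hNE v hv)
  have hSpowE := aux_pow_mem E S hSE
  have hform : ∀ v ∈ E, ∀ w ∈ E, (S *ᵥ v) ⬝ᵥ w = (N *ᵥ v) ⬝ᵥ (N *ᵥ w) := by
    intro v hv w hw
    rw [hS, ← Matrix.mulVec_mulVec]
    exact hadjNt _ (hNE v hv) w hw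
  have hSnil : S ^ (k + 1) = 0 := by
    rw [hS, hc.mul_pow, pow_succ N k, hnil, zero_mul, mul_zero]
  have hstep : ∀ m : ℕ, (∀ v ∈ E, (S ^ (m + 2)) *ᵥ v = 0) →
      ∀ v ∈ E, (S ^ (m + 1)) *ᵥ v = 0 := by
    intro m h v hv
    set x := (S ^ m) *ᵥ v with hx
    have hxE : x ∈ E := hSpowE m v hv
    set y := (S ^ (m + 1)) *ᵥ v with hy
    have hyE : y ∈ E := hSpowE (m + 1) v hv
    have hyx : y = S *ᵥ x := by
      rw [hy, hx, Matrix.mulVec_mulVec, ← pow_succ']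
    have h1 : y ⬝ᵥ y = (N *ᵥ x) ⬝ᵥ (N *ᵥ y) := by
      nth_rewrite 1 [hyx]
      exact hform x hxE y hyE
    have hSy : S *ᵥ y = 0 := by
      rw [hy, Matrix.mulVec_mulVec, ← pow_succ']
      exact h v hv
    have h2 : (N *ᵥ y) ⬝ᵥ (N *ᵥ x) = 0 := by
      rw [← hform y hyE x hxE, hSy, zero_dotProduct]
    rw [dotProduct_comm] at h2
    rw [h2] at h1
    exact dotProduct_self_eq_zero.mp h1
  have hone : ∀ v ∈ E, S *ᵥ v = 0 := by
    have main : ∀ m : ℕ, (∀ v ∈ E, (S ^ (m + 1)) *ᵥ v = 0) → ∀ v ∈ E, S *ᵥ v = 0 := by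
      intro m
      induction m with
      | zero => intro h v hv; simpa using h v hv
      | succ m ih => intro h; exact ih (hstep m h)
    exact main k (by intro v hv; rw [hSnil, Matrix.zero_mulVec])
  intro v hv
  have h3 : (N *ᵥ v) ⬝ᵥ (N *ᵥ v) = 0 := by
    rw [← hform v hv v hv, hone v hv, zero_dotProduct]
  exact dotProduct_self_eq_zero.mp h3

lemma aux_lattice_closed (p : ℕ) : IsClosed ((intLattice p : AddSubgroup (Fin p → ℝ)) : Set (Fin p → ℝ)) := by
  have heq : ((intLattice p : AddSubgroup (Fin p → ℝ)) : Set (Fin p → ℝ)) =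
      ⋂ i : Fin p, (fun x : Fin p → ℝ => x i) ⁻¹' (Set.range (Int.cast : ℤ → ℝ)) := by
    ext x
    simp only [Set.mem_iInter, Set.mem_preimage, Set.mem_range]
    constructor
    · rintro ⟨v, rfl⟩ i
      exact ⟨v i, rfl⟩
    · intro h
      refine ⟨fun i => (h i).choose, funext fun i => (h i).choose_spec⟩
  rw [heq]
  exact isClosed_iInter fun i =>
    (Int.isClosedEmbedding_coe_real.isClosed_range).preimage (continuous_apply i)

lemma aux_torus (p : ℕ) (E : Submodule ℝ (Fin p → ℝ)) (C : Matrix (Fin p) (Fin p) ℤ)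
    (hdense : Dense
      ((QuotientAddGroup.mk : (Fin p → ℝ) → (Fin p → ℝ) ⧸ intLattice p) ''
        (E : Set (Fin p → ℝ))))
    (hCE : ∀ v ∈ E, (C.map (Int.cast : ℤ → ℝ)) *ᵥ v = 0) :
    C.map (Int.cast : ℤ → ℝ) = 0 := by
  set Cr := C.map (Int.cast : ℤ → ℝ) with hCr
  set L := intLattice p with hL
  -- the lattice maps into itself under C
  have hlat : ∀ x ∈ L, Cr *ᵥ x ∈ L := by
    rintro x ⟨v, rfl⟩
    refine ⟨C *ᵥ v, ?_⟩
    show (fun i => ((C *ᵥ v) i : ℝ)) = _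
    funext i
    show (((C *ᵥ v) i : ℤ) : ℝ) = (Cr *ᵥ (fun j => (v j : ℝ))) i
    simp only [Matrix.mulVec, dotProduct, hCr, Matrix.map_apply]
    push_cast
    rfl
  -- density of E + L in ℝ^p
  have hdense' : Dense ((E : Set (Fin p → ℝ)) + (L : Set (Fin p → ℝ))) := by
    rw [dense_iff_inter_open]
    intro U hU hne
    have hopen : IsOpen ((QuotientAddGroup.mk : (Fin p → ℝ) → (Fin p → ℝ) ⧸ intLattice p) '' U) :=
      QuotientAddGroup.isOpenMap_coe U hU
    obtain ⟨z, hz1, hz2⟩ := hdense.inter_open_nonempty _ hopen (hne.image _)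
    obtain ⟨u, hu, huz⟩ := hz1
    obtain ⟨e, he, hez⟩ := hz2
    have hmk : (QuotientAddGroup.mk e : (Fin p → ℝ) ⧸ intLattice p) = QuotientAddGroup.mk u := by
      rw [hez, huz]
    have hmem : -e + u ∈ L := QuotientAddGroup.eq.mp hmk
    exact ⟨u, hu, ⟨e, he, -e + u, hmem, add_neg_cancel_left e u⟩⟩
  -- the set where C maps into the lattice is closed and contains E + L
  have hcont : Continuous (fun x : Fin p → ℝ => Cr *ᵥ x) := by
    have : (fun x : Fin p → ℝ => Cr *ᵥ x) = ⇑(Matrix.mulVecLin Cr) := by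
      funext x; simp [Matrix.mulVecLin_apply]
    rw [this]
    exact (Matrix.mulVecLin Cr).continuous_of_finiteDimensional
  have hTclosed : IsClosed {x : Fin p → ℝ | Cr *ᵥ x ∈ L} :=
    (aux_lattice_closed p).preimage hcont
  have hTsub : (E : Set (Fin p → ℝ)) + (L : Set (Fin p → ℝ)) ⊆ {x | Cr *ᵥ x ∈ L} := by
    rintro x ⟨e, he, u, hu, rfl⟩
    show Cr *ᵥ (e + u) ∈ L
    rw [Matrix.mulVec_add, hCE e he, zero_add]
    exact hlat u hu
  have hall : ∀ x : Fin p → ℝ, Cr *ᵥ x ∈ L := by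
    have hdT : Dense {x : Fin p → ℝ | Cr *ᵥ x ∈ L} := hdense'.mono hTsub
    have huniv : {x : Fin p → ℝ | Cr *ᵥ x ∈ L} = Set.univ :=
      hTclosed.closure_eq ▸ hdT.closure_eq
    intro x
    have hx : x ∈ {x : Fin p → ℝ | Cr *ᵥ x ∈ L} := by rw [huniv]; trivial
    exact hx
  -- linear scaling kills everything
  have hzero : ∀ x : Fin p → ℝ, Cr *ᵥ x = 0 := by
    intro x
    funext i
    by_contra hc
    set c := (Cr *ᵥ x) i with hci
    have hc0 : c ≠ 0 := hc
    obtain ⟨v, hv⟩ := hall ((1 / (2 * c)) • x)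
    have hvi : ((v i : ℝ)) = (1 / (2 * c)) * c := by
      have h := congrFun hv i
      simp only [AddMonoidHom.mk'_apply, Matrix.mulVec_smul, Pi.smul_apply, smul_eq_mul] at h
      rw [← hci] at h
      exact h
    have hhalf : ((v i : ℝ)) = 1 / 2 := by
      rw [hvi]
      field_simp
    have h2 : ((2 * v i : ℤ) : ℝ) = ((1 : ℤ) : ℝ) := by
      push_cast
      rw [hhalf]
      ring
    have := Int.cast_injective h2
    omega
  ext i j
  have := congrFun (hzero (Pi.single j 1)) i
  simpa [Matrix.mulVec_single] using this

/-- If A ∈ GL_p(ℤ) restricts to a similarity (of ratio λ > 0) on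
an A-invariant subspace E ⊆ ℝ^p whose image in the torus ℝ^p/ℤ^p is dense,
then A is semisimple (its minimal polynomial over ℚ is squarefree). -/
theorem stmt_13 (p : ℕ) (A : Matrix (Fin p) (Fin p) ℤ) (hA : IsUnit A.det)
    (E : Submodule ℝ (Fin p → ℝ))
    (hinv : ∀ v ∈ E, (A.map (Int.cast : ℤ → ℝ)) *ᵥ v ∈ E)
    (l : ℝ) (hl : 0 < l)
    (hsim : ∀ v ∈ E, ∀ w ∈ E,
      ((A.map (Int.cast : ℤ → ℝ)) *ᵥ v) ⬝ᵥ ((A.map (Int.cast : ℤ → ℝ)) *ᵥ w) =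
        l ^ 2 * (v ⬝ᵥ w))
    (hdense : Dense
      ((QuotientAddGroup.mk : (Fin p → ℝ) → (Fin p → ℝ) ⧸ intLattice p) ''
        (E : Set (Fin p → ℝ)))) :
    Squarefree (minpoly ℚ (Matrix.toLin' (A.map (Int.cast : ℤ → ℚ)))) := by
  set Aq : Matrix (Fin p) (Fin p) ℚ := A.map (Int.cast : ℤ → ℚ) with hAq
  set Ar : Matrix (Fin p) (Fin p) ℝ := A.map (Int.cast : ℤ → ℝ) with hAr
  set f : Module.End ℚ (Fin p → ℚ) := Matrix.toLin' Aq with hf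
  -- Jordan-Chevalley decomposition over ℚ
  obtain ⟨n, hn, s, hs, hnil, hss, hfns⟩ :=
    Module.End.exists_isNilpotent_isSemisimple (K := ℚ) (V := Fin p → ℚ) (f := f)
  rw [Algebra.adjoin_singleton_eq_range_aeval] at hn
  obtain ⟨q, hq⟩ := hn
  suffices hn0 : n = 0 by
    rw [hfns, hn0, zero_add]
    exact hss.minpoly_squarefree
  -- the matrix incarnations
  set e : Matrix (Fin p) (Fin p) ℚ ≃ₐ[ℚ] Module.End ℚ (Fin p → ℚ) :=
    Matrix.toLinAlgEquiv' with he
  set Nq : Matrix (Fin p) (Fin p) ℚ := aeval Aq q with hNq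
  have heN : e Nq = n := by
    rw [hNq, ← Polynomial.aeval_algHom_apply e Aq q]
    exact hq
  suffices hNq0 : Nq = 0 by
    rw [← heN, hNq0, map_zero]
  have hNqnil : IsNilpotent Nq := by
    have : IsNilpotent (e.symm n) := hnil.map e.symm
    rwa [← heN, AlgEquiv.symm_apply_apply] at this
  obtain ⟨k, hk⟩ := hNqnil
  -- real versions
  set qr : Polynomial ℝ := q.map (algebraMap ℚ ℝ) with hqr
  set Nr : Matrix (Fin p) (Fin p) ℝ := aeval Ar qr with hNr
  set φ : Matrix (Fin p) (Fin p) ℚ →+* Matrix (Fin p) (Fin p) ℝ :=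
    (Rat.castHom ℝ).mapMatrix with hφ
  have hφA : φ Aq = Ar := by
    have hcomp : (Rat.cast : ℚ → ℝ) ∘ (Int.cast : ℤ → ℚ) = (Int.cast : ℤ → ℝ) :=
      funext fun x => Rat.cast_intCast x
    rw [hφ, RingHom.mapMatrix_apply, hAq, hAr, Matrix.map_map, Rat.coe_castHom, hcomp]
  have hNrq : Nr = φ Nq := by
    rw [hNr, hNq, hqr, aeval_def, aeval_def, Polynomial.eval₂_map,
      Polynomial.hom_eval₂, hφA]
    congr 1
    exact Subsingleton.elim _ _
  have hNrnil : Nr ^ k = 0 := by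
    rw [hNrq, ← map_pow, hk, map_zero]
  -- invertibility of Ar
  have hdet : IsUnit Ar.det := by
    have : Ar.det = (Int.castRingHom ℝ) A.det := by
      rw [RingHom.map_det, RingHom.mapMatrix_apply]
      rfl
    rw [this]
    exact hA.map (Int.castRingHom ℝ)
  -- E is invariant under Ar⁻¹
  have hmulinj : ∀ x y : Fin p → ℝ, Ar *ᵥ x = Ar *ᵥ y → x = y := by
    intro x y hxy
    have h1 : Ar⁻¹ *ᵥ (Ar *ᵥ x) = Ar⁻¹ *ᵥ (Ar *ᵥ y) := by rw [hxy]
    rwa [Matrix.mulVec_mulVec, Matrix.mulVec_mulVec, Matrix.nonsing_inv_mul _ hdet,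
      Matrix.one_mulVec, Matrix.one_mulVec] at h1
  have hMinv : ∀ w ∈ E, Ar⁻¹ *ᵥ w ∈ E := by
    have hres : ∀ x ∈ E, (Matrix.mulVecLin Ar) x ∈ E := by
      intro x hx
      rw [Matrix.mulVecLin_apply]
      exact hinv x hx
    set g : E →ₗ[ℝ] E := LinearMap.restrict (Matrix.mulVecLin Ar) hres with hg
    have ginj : Function.Injective g := by
      intro x y hxy
      have : Ar *ᵥ (x : Fin p → ℝ) = Ar *ᵥ (y : Fin p → ℝ) := by
        have := congrArg (Subtype.val) hxy
        simpa [hg, LinearMap.restrict_apply, Matrix.mulVecLin_apply] using this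
      exact Subtype.ext (hmulinj _ _ this)
    have gsurj : Function.Surjective g := (LinearMap.injective_iff_surjective).mp ginj
    intro w hw
    obtain ⟨⟨u, hu⟩, hgu⟩ := gsurj ⟨w, hw⟩
    have huw : Ar *ᵥ u = w := by
      have := congrArg (Subtype.val) hgu
      simpa [hg, LinearMap.restrict_apply, Matrix.mulVecLin_apply] using this
    have : Ar⁻¹ *ᵥ w = u := by
      rw [← huw, Matrix.mulVec_mulVec, Matrix.nonsing_inv_mul _ hdet, Matrix.one_mulVec]
    rw [this]
    exact hu
  -- the adjoint matrix on E
  set Mi : Matrix (Fin p) (Fin p) ℝ := (l ^ 2) • Ar⁻¹ with hMi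
  have hMiE : ∀ v ∈ E, Mi *ᵥ v ∈ E := by
    intro v hv
    rw [hMi, Matrix.smul_mulVec]
    exact E.smul_mem _ (hMinv v hv)
  have hadj : ∀ v ∈ E, ∀ w ∈ E, (Ar *ᵥ v) ⬝ᵥ w = v ⬝ᵥ (Mi *ᵥ w) := by
    intro v hv w hw
    have hw' : Ar *ᵥ (Ar⁻¹ *ᵥ w) = w := by
      rw [Matrix.mulVec_mulVec, Matrix.mul_nonsing_inv _ hdet, Matrix.one_mulVec]
    calc (Ar *ᵥ v) ⬝ᵥ w = (Ar *ᵥ v) ⬝ᵥ (Ar *ᵥ (Ar⁻¹ *ᵥ w)) := by rw [hw']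
      _ = l ^ 2 * (v ⬝ᵥ (Ar⁻¹ *ᵥ w)) := hsim v hv _ (hMinv w hw)
      _ = v ⬝ᵥ (Mi *ᵥ w) := by
          rw [hMi, Matrix.smul_mulVec, dotProduct_smul, smul_eq_mul]
  -- polynomial images
  set Nt : Matrix (Fin p) (Fin p) ℝ := aeval Mi qr with hNt
  have hNE : ∀ v ∈ E, Nr *ᵥ v ∈ E := aux_aeval_mem E Ar hinv qr
  have hNtE : ∀ v ∈ E, Nt *ᵥ v ∈ E := aux_aeval_mem E Mi hMiE qr
  have hadjq : ∀ v ∈ E, ∀ w ∈ E, (Nr *ᵥ v) ⬝ᵥ w = v ⬝ᵥ (Nt *ᵥ w) :=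
    aux_aeval_adjoint E Ar Mi hinv hMiE hadj qr
  have hadjNt : ∀ v ∈ E, ∀ w ∈ E, (Nt *ᵥ v) ⬝ᵥ w = v ⬝ᵥ (Nr *ᵥ w) := by
    intro v hv w hw
    calc (Nt *ᵥ v) ⬝ᵥ w = w ⬝ᵥ (Nt *ᵥ v) := dotProduct_comm _ _
      _ = (Nr *ᵥ w) ⬝ᵥ v := (hadjq w hw v hv).symm
      _ = v ⬝ᵥ (Nr *ᵥ w) := dotProduct_comm _ _
  have hcMiAr : Commute Mi Ar := by
    rw [hMi]
    refine Commute.smul_left ?_ _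
    show Ar⁻¹ * Ar = Ar * Ar⁻¹
    rw [Matrix.nonsing_inv_mul _ hdet, Matrix.mul_nonsing_inv _ hdet]
  have hc : Commute Nt Nr := aux_commute_aeval hcMiAr qr qr
  -- N vanishes on E
  have hNv0 : ∀ v ∈ E, Nr *ᵥ v = 0 :=
    aux_nilpotent_vanish E Nr Nt hc hNE hNtE hadjNt k hNrnil
  -- scale to an integer matrix
  set m : ℤ := ∏ i : Fin p, ∏ j : Fin p, ((Nq i j).den : ℤ) with hm
  have hmpos : 0 < m := by
    rw [hm]
    refine Finset.prod_pos fun i _ => Finset.prod_pos fun j _ => ?_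
    exact_mod_cast (Nq i j).pos
  have hden : ∀ i j, ((Nq i j).den : ℤ) ∣ m := by
    intro i j
    rw [hm]
    exact dvd_trans
      (Finset.dvd_prod_of_mem (fun j => ((Nq i j).den : ℤ)) (Finset.mem_univ j))
      (Finset.dvd_prod_of_mem (fun i => ∏ j : Fin p, ((Nq i j).den : ℤ)) (Finset.mem_univ i))
  have hint : ∀ i j, ∃ z : ℤ, ((z : ℚ)) = (m : ℚ) * Nq i j := by
    intro i j
    obtain ⟨c, hcm⟩ := hden i j
    refine ⟨c * (Nq i j).num, ?_⟩
    push_cast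
    rw [← Rat.mul_den_eq_num]
    rw [hcm]
    push_cast
    ring
  set C : Matrix (Fin p) (Fin p) ℤ := Matrix.of (fun i j => (hint i j).choose) with hC
  have hCr : C.map (Int.cast : ℤ → ℝ) = (m : ℝ) • Nr := by
    ext i j
    have hspec := (hint i j).choose_spec
    have := congrArg (Rat.cast : ℚ → ℝ) hspec
    push_cast at this
    rw [Matrix.map_apply, hC]
    rw [Matrix.smul_apply, smul_eq_mul]
    have hNrij : Nr i j = ((Nq i j : ℚ) : ℝ) := by
      rw [hNrq, hφ, RingHom.mapMatrix_apply, Matrix.map_apply]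
      rfl
    rw [hNrij]
    exact this
  have hCE : ∀ v ∈ E, (C.map (Int.cast : ℤ → ℝ)) *ᵥ v = 0 := by
    intro v hv
    rw [hCr, Matrix.smul_mulVec, hNv0 v hv, smul_zero]
  have hC0 : C.map (Int.cast : ℤ → ℝ) = 0 := aux_torus p E C hdense hCE
  have hNr0 : Nr = 0 := by
    have h1 : (m : ℝ) • Nr = 0 := by rw [← hCr, hC0]
    have h2 : (m : ℝ) ≠ 0 := by
      exact_mod_cast hmpos.ne'
    rcases smul_eq_zero.mp h1 with h | h
    · exact absurd h h2
    · exact h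
  -- back to ℚ
  ext i j
  have : ((Nq i j : ℚ) : ℝ) = 0 := by
    rw [show ((Nq i j : ℚ) : ℝ) = Nr i j from ?_, hNr0, Matrix.zero_apply]
    rw [hNrq, hφ, RingHom.mapMatrix_apply, Matrix.map_apply]
    rfl
  exact_mod_cast this
end
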